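/- Let ε > 0, λ > 0, and draw m i.i.d. samples from each ρ_{x_j}, j = 1,…,d, independently. Then for every f ∈ H, with probability at least 1 − 2d · exp( − m ε² / (2 ‖k‖_∞) ), the regularized Monte Carlo approximant satisfies ‖(\hat{K}^{MC}_λ − \hat{K}_λ) f‖_∞ ≤ ε · ‖k‖_∞^{1/2} · √(d/λ) · ‖f‖_H. -/

import Mathlib

open MeasureTheory ProbabilityTheory Matrix
open scoped RealInnerProductSpace

noncomputable section

/-- The kernel matrix `K_X = (k(x_i,x_j))_{i,j}` built from the feature map `Φ`. -/
def kerMatrix {n : ℕ} {H : Type*} [NormedAddCommGroup H] [InnerProductSpace ℝ H]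
    (Φ : EuclideanSpace ℝ (Fin n) → H) (d : ℕ) (x : Fin d → EuclideanSpace ℝ (Fin n)) :
    Matrix (Fin d) (Fin d) ℝ :=
  Matrix.of fun i j => ⟪Φ (x i), Φ (x j)⟫

/-- The kernel vector `k_X(z) = (k(x_1,z),…,k(x_d,z))ᵀ`. -/
def kerVec {n : ℕ} {H : Type*} [NormedAddCommGroup H] [InnerProductSpace ℝ H]
    (Φ : EuclideanSpace ℝ (Fin n) → H) (d : ℕ) (x : Fin d → EuclideanSpace ℝ (Fin n))
    (z : EuclideanSpace ℝ (Fin n)) : Fin d → ℝ :=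
  fun i => ⟪Φ (x i), Φ z⟫

/-- The exact propagation matrix `(K_{X,Y})_{ij} = ∫_Ω k(x_i,y) dρ_{x_j}(y)`. -/
def propMatrix {n : ℕ} {H : Type*} [NormedAddCommGroup H] [InnerProductSpace ℝ H]
    (Ω : Set (EuclideanSpace ℝ (Fin n)))
    (ρ : ProbabilityTheory.Kernel (EuclideanSpace ℝ (Fin n)) (EuclideanSpace ℝ (Fin n)))
    (Φ : EuclideanSpace ℝ (Fin n) → H) (d : ℕ) (x : Fin d → EuclideanSpace ℝ (Fin n)) :
    Matrix (Fin d) (Fin d) ℝ :=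
  Matrix.of fun i j => ∫ y in Ω, ⟪Φ (x i), Φ y⟫ ∂(ρ (x j))

/-- The Monte Carlo propagation matrix
`(K^{MC}_{X,Y})_{ij} = (1/m) ∑_{l=1}^m k(x_i, y_{l,j})` at the sample point `θ`. -/
def propMatrixMC {n : ℕ} {H : Type*} [NormedAddCommGroup H] [InnerProductSpace ℝ H]
    (Φ : EuclideanSpace ℝ (Fin n) → H) (d : ℕ) (x : Fin d → EuclideanSpace ℝ (Fin n))
    (m : ℕ) {Θ : Type*} (Y : Fin m × Fin d → Θ → EuclideanSpace ℝ (Fin n)) (θ : Θ) :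
    Matrix (Fin d) (Fin d) ℝ :=
  Matrix.of fun i j => (1 / (m : ℝ)) * ∑ l : Fin m, ⟪Φ (x i), Φ (Y (l, j) θ)⟫


/-!
Write `g = (K_X + λI)⁻¹ f_X`, `h = ∑ᵢ gᵢ Φ(xᵢ) ∈ H` and `u(z) = (K_X + λI)⁻¹ k_X(z)`. Since
`K_X + λI` is symmetric, the error at `z` is `∑ⱼ Dⱼ uⱼ(z)`, where `Dⱼ` is the error of the sample
mean of `⟪h, Φ(y_{l,j})⟫` over `l` as an estimate of `∫_Ω ⟪h, Φ y⟫ dρ_{x_j}(y)`. These are means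
of `m` independent variables bounded by `‖h‖ √‖k‖_∞`, so Hoeffding's inequality and a union bound
over the `d` columns give `|Dⱼ| ≤ ε ‖h‖` for all `j` with the stated probability.
The identity `‖∑ᵢ cᵢ Φ(xᵢ)‖² + λ |c|² = ⟪∑ᵢ cᵢ Φ(xᵢ), w⟫` for `c = (K_X + λI)⁻¹ (⟪Φ(xᵢ), w⟫)ᵢ`
yields `‖h‖ ≤ ‖f‖` (take `w = f`) and `λ |u(z)|² ≤ ‖Φ z‖² ≤ ‖k‖_∞` (take `w = Φ z`), hence
`∑ⱼ |uⱼ(z)| ≤ √‖k‖_∞ √(d/λ)` by Cauchy–Schwarz.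
-/

section Ridge

variable {ι H : Type*} [Fintype ι] [DecidableEq ι] [NormedAddCommGroup H] [InnerProductSpace ℝ H]

theorem Matrix.posDef_gram_add_smul_one (v : ι → H) {lam : ℝ} (hlam : 0 < lam) :
    (gram ℝ v + lam • (1 : Matrix ι ι ℝ)).PosDef :=
  (PosDef.one.smul hlam).posSemidef_add (posSemidef_gram ℝ v)

theorem Matrix.dotProduct_inv_gram_add_smul_one_mulVec (v : ι → H) (lam : ℝ) (a b : ι → ℝ) :
    a ⬝ᵥ ((gram ℝ v + lam • (1 : Matrix ι ι ℝ))⁻¹ *ᵥ b) =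
      ((gram ℝ v + lam • (1 : Matrix ι ι ℝ))⁻¹ *ᵥ a) ⬝ᵥ b := by
  have hsymm : (gram ℝ v + lam • (1 : Matrix ι ι ℝ))⁻¹ᵀ = (gram ℝ v + lam • 1)⁻¹ := by
    rw [← conjTranspose_eq_transpose_of_trivial]
    exact ((isHermitian_gram ℝ v).add (isHermitian_one.smul (IsSelfAdjoint.all lam))).inv
  rw [dotProduct_mulVec, ← mulVec_transpose, hsymm]

/-- The coefficients of the Tikhonov-regularized projection of `w` onto the span of `v`. -/
def ridgeCoeff (v : ι → H) (lam : ℝ) (w : H) : ι → ℝ :=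
  (gram ℝ v + lam • (1 : Matrix ι ι ℝ))⁻¹ *ᵥ fun i => ⟪v i, w⟫

theorem norm_sq_add_mul_dotProduct_ridgeCoeff (v : ι → H) {lam : ℝ} (hlam : 0 < lam) (w : H) :
    ‖∑ i, ridgeCoeff v lam w i • v i‖ ^ 2 + lam * (ridgeCoeff v lam w ⬝ᵥ ridgeCoeff v lam w) =
      ⟪∑ i, ridgeCoeff v lam w i • v i, w⟫ := by
  have hsolve :
      (gram ℝ v + lam • (1 : Matrix ι ι ℝ)) *ᵥ ridgeCoeff v lam w = fun i => ⟪v i, w⟫ := by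
    rw [ridgeCoeff, mulVec_mulVec,
      mul_nonsing_inv _ (posDef_gram_add_smul_one v hlam).det_pos.ne'.isUnit, one_mulVec]
  set u := ridgeCoeff v lam w
  calc ‖∑ i, u i • v i‖ ^ 2 + lam * (u ⬝ᵥ u)
      = star u ⬝ᵥ (gram ℝ v *ᵥ u) + lam * (u ⬝ᵥ u) := by
        rw [star_dotProduct_gram_mulVec, real_inner_self_eq_norm_sq]
    _ = u ⬝ᵥ ((gram ℝ v + lam • (1 : Matrix ι ι ℝ)) *ᵥ u) := by
        rw [star_trivial, add_mulVec, dotProduct_add, smul_mulVec, one_mulVec, dotProduct_smul,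
          smul_eq_mul]
    _ = ⟪∑ i, u i • v i, w⟫ := by
        simp only [hsolve, sum_inner, real_inner_smul_left, dotProduct]

theorem norm_sum_ridgeCoeff_smul_le (v : ι → H) {lam : ℝ} (hlam : 0 < lam) (w : H) :
    ‖∑ i, ridgeCoeff v lam w i • v i‖ ≤ ‖w‖ := by
  have key := norm_sq_add_mul_dotProduct_ridgeCoeff v hlam w
  have hcs := real_inner_le_norm (∑ i, ridgeCoeff v lam w i • v i) w
  have hnonneg : 0 ≤ lam * (ridgeCoeff v lam w ⬝ᵥ ridgeCoeff v lam w) :=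
    mul_nonneg hlam.le (Finset.sum_nonneg fun i _ => mul_self_nonneg _)
  nlinarith [norm_nonneg (∑ i, ridgeCoeff v lam w i • v i), norm_nonneg w]

theorem mul_dotProduct_self_ridgeCoeff_le (v : ι → H) {lam : ℝ} (hlam : 0 < lam) (w : H) :
    lam * (ridgeCoeff v lam w ⬝ᵥ ridgeCoeff v lam w) ≤ ‖w‖ ^ 2 := by
  have key := norm_sq_add_mul_dotProduct_ridgeCoeff v hlam w
  have hcs := real_inner_le_norm (∑ i, ridgeCoeff v lam w i • v i) w
  have hle := norm_sum_ridgeCoeff_smul_le v hlam w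
  nlinarith [norm_nonneg (∑ i, ridgeCoeff v lam w i • v i), norm_nonneg w]

theorem sum_abs_ridgeCoeff_le (v : ι → H) {lam : ℝ} (hlam : 0 < lam) (w : H) :
    ∑ i, |ridgeCoeff v lam w i| ≤ ‖w‖ * √(Fintype.card ι / lam) := by
  set u := ridgeCoeff v lam w
  rw [← Real.sqrt_sq (norm_nonneg w), ← Real.sqrt_mul (sq_nonneg _)]
  refine Real.le_sqrt_of_sq_le ?_
  calc (∑ i, |u i|) ^ 2 ≤ Fintype.card ι * (u ⬝ᵥ u) := by
        simpa [dotProduct, sq] using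
          sq_sum_le_card_mul_sum_sq (s := Finset.univ) (f := fun i => |u i|)
    _ ≤ Fintype.card ι * (‖w‖ ^ 2 / lam) := by
        gcongr
        rw [le_div_iff₀ hlam, mul_comm]
        exact mul_dotProduct_self_ridgeCoeff_le v hlam w
    _ = ‖w‖ ^ 2 * (Fintype.card ι / lam) := by ring

end Ridge

section Hoeffding
open Real

variable {Θ E : Type*} [MeasurableSpace Θ] [MeasurableSpace E] {P : Measure Θ}
  [IsProbabilityMeasure P]

theorem measureReal_le_abs_sampleMean_sub_integral_le {m : ℕ} (hm : m ≠ 0) {X : Fin m → Θ → E}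
    (hX : ∀ l, Measurable (X l)) (hindep : iIndepFun X P) {μ : Measure E}
    (hlaw : ∀ l, P.map (X l) = μ) {F : E → ℝ} (hF : Measurable F) {a b : ℝ}
    (hFab : ∀ y, F y ∈ Set.Icc a b) {t : ℝ} (ht : 0 ≤ t) :
    P.real {θ | t ≤ |(m : ℝ)⁻¹ * ∑ l, F (X l θ) - ∫ y, F y ∂μ|} ≤
      2 * exp (-2 * m * t ^ 2 / (b - a) ^ 2) := by
  set W : Fin m → Θ → ℝ := fun l θ => F (X l θ) - ∫ y, F y ∂μ
  have hsubG : ∀ l, HasSubgaussianMGF (W l) ((‖b - a‖₊ / 2) ^ 2) P := by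
    intro l
    have := hasSubgaussianMGF_of_mem_Icc (μ := P) (X := fun θ => F (X l θ))
      (hF.comp (hX l)).aemeasurable
      (ae_of_all _ fun θ => hFab (X l θ))
    rwa [← integral_map (hX l).aemeasurable hF.aestronglyMeasurable, hlaw l] at this
  have htail : ∀ V : Fin m → Θ → ℝ, iIndepFun V P →
      (∀ l, HasSubgaussianMGF (V l) ((‖b - a‖₊ / 2) ^ 2) P) →
      P.real {θ | m * t ≤ ∑ l, V l θ} ≤ exp (-2 * m * t ^ 2 / (b - a) ^ 2) := by
    intro V hV hVG
    refine (HasSubgaussianMGF.measure_sum_ge_le_of_iIndepFun hV (fun l _ => hVG l)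
      (by positivity)).trans_eq ?_
    have hm' : (m : ℝ) ≠ 0 := Nat.cast_ne_zero.2 hm
    congr 1
    simp only [Finset.sum_const, Finset.card_univ, Fintype.card_fin, nsmul_eq_mul, NNReal.coe_mul,
      NNReal.coe_natCast, NNReal.coe_pow, NNReal.coe_div, coe_nnnorm, Real.norm_eq_abs,
      NNReal.coe_ofNat, div_pow, sq_abs]
    field_simp
  have hsplit : {θ | t ≤ |(m : ℝ)⁻¹ * ∑ l, F (X l θ) - ∫ y, F y ∂μ|} ⊆
      {θ | m * t ≤ ∑ l, W l θ} ∪ {θ | m * t ≤ ∑ l, (-W l) θ} := by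
    intro θ hθ
    have hsum : ∑ l, W l θ = m * ((m : ℝ)⁻¹ * ∑ l, F (X l θ) - ∫ y, F y ∂μ) := by
      simp [W, Finset.sum_sub_distrib, mul_sub, hm]
    have habs : m * t ≤ |∑ l, W l θ| := by
      rw [hsum, abs_mul, Nat.abs_cast]
      exact mul_le_mul_of_nonneg_left hθ (Nat.cast_nonneg m)
    rcases le_abs'.1 habs with h | h
    · right
      simpa [Finset.sum_neg_distrib] using neg_le_neg h
    · exact Or.inl h
  calc P.real {θ | t ≤ |(m : ℝ)⁻¹ * ∑ l, F (X l θ) - ∫ y, F y ∂μ|}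
      ≤ P.real {θ | m * t ≤ ∑ l, W l θ} + P.real {θ | m * t ≤ ∑ l, (-W l) θ} :=
        (measureReal_mono hsplit).trans (measureReal_union_le _ _)
    _ ≤ _ := by
        have hindepW : iIndepFun W P :=
          hindep.comp (fun _ y => F y - ∫ y, F y ∂μ) fun _ => hF.sub_const _
        linarith [htail W hindepW hsubG,
          htail (fun l => -W l) (hindepW.comp (fun _ r => -r) fun _ => measurable_neg)
            fun l => (hsubG l).neg]

theorem le_measure_forall_abs_sampleMean_sub_integral_lt {ι : Type*} [Fintype ι] {m : ℕ}
    (hm : m ≠ 0) {Y : Fin m × ι → Θ → E} (hY : ∀ p, Measurable (Y p)) (hindep : iIndepFun Y P)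
    {μ : ι → Measure E} (hlaw : ∀ l j, P.map (Y (l, j)) = μ j) {F : E → ℝ} (hF : Measurable F)
    {a b : ℝ} (hFab : ∀ y, F y ∈ Set.Icc a b) {t : ℝ} (ht : 0 ≤ t) :
    ENNReal.ofReal (1 - 2 * Fintype.card ι * exp (-2 * m * t ^ 2 / (b - a) ^ 2)) ≤
      P {θ | ∀ j, |(m : ℝ)⁻¹ * ∑ l, F (Y (l, j) θ) - ∫ y, F y ∂μ j| < t} := by
  set e := exp (-2 * m * t ^ 2 / (b - a) ^ 2)
  set S := {θ | ∀ j, |(m : ℝ)⁻¹ * ∑ l, F (Y (l, j) θ) - ∫ y, F y ∂μ j| < t}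
  have hcompl : P Sᶜ ≤ ENNReal.ofReal (2 * Fintype.card ι * e) := by
    have hS : Sᶜ = ⋃ j, {θ | t ≤ |(m : ℝ)⁻¹ * ∑ l, F (Y (l, j) θ) - ∫ y, F y ∂μ j|} := by
      ext θ; simp [S]
    have hcol : ∀ j, P {θ | t ≤ |(m : ℝ)⁻¹ * ∑ l, F (Y (l, j) θ) - ∫ y, F y ∂μ j|} ≤
        ENNReal.ofReal (2 * e) := fun j => by
      rw [← ofReal_measureReal]
      exact ENNReal.ofReal_le_ofReal <| measureReal_le_abs_sampleMean_sub_integral_le hm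
        (fun l => hY (l, j)) (hindep.precomp (Prod.mk_left_injective j)) (hlaw · j) hF hFab ht
    calc P Sᶜ ≤ ∑ j, P {θ | t ≤ |(m : ℝ)⁻¹ * ∑ l, F (Y (l, j) θ) - ∫ y, F y ∂μ j|} :=
          hS ▸ measure_iUnion_fintype_le _ _
      _ ≤ ∑ _j : ι, ENNReal.ofReal (2 * e) := Finset.sum_le_sum fun j _ => hcol j
      _ = ENNReal.ofReal (2 * Fintype.card ι * e) := by
          rw [Finset.sum_const, Finset.card_univ, nsmul_eq_mul, ← ENNReal.ofReal_natCast,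
            ← ENNReal.ofReal_mul (Nat.cast_nonneg _)]
          congr 1
          ring
  calc ENNReal.ofReal (1 - 2 * Fintype.card ι * e)
        = 1 - ENNReal.ofReal (2 * Fintype.card ι * e) := by
        rw [ENNReal.ofReal_sub _ (by positivity), ENNReal.ofReal_one]
    _ ≤ 1 - P Sᶜ := tsub_le_tsub_left hcompl 1
    _ ≤ P S := tsub_le_iff_right.2 (measure_univ.symm.trans_le (measure_univ_le_add_compl S))

end Hoeffding

section MonteCarlo

variable {E H : Type*} [TopologicalSpace E] [MeasurableSpace E] [OpensMeasurableSpace E]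
  [NormedAddCommGroup H] [InnerProductSpace ℝ H] {Ω : Set E} {Φ : E → H} {κ : ℝ}

def mcDeviation (Ω : Set E) {ι : Type*} (μ : ι → Measure E) (Φ : E → H) {m : ℕ} {Θ : Type*}
    (Y : Fin m × ι → Θ → E) (h : H) (θ : Θ) : ι → ℝ :=
  fun j => (m : ℝ)⁻¹ * ∑ l, ⟪h, Φ (Y (l, j) θ)⟫ - ∫ y in Ω, ⟪h, Φ y⟫ ∂μ j

theorem integrableOn_inner_of_continuousOn {μ : Measure E} [IsFiniteMeasure μ]
    (hΩ : MeasurableSet Ω) (hΦ : ContinuousOn Φ Ω) (hbdd : ∀ y ∈ Ω, ‖Φ y‖ ≤ κ) (w : H) :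
    IntegrableOn (fun y => ⟪w, Φ y⟫) Ω μ :=
  (integrable_const (‖w‖ * κ)).mono'
    ((continuous_const.inner continuous_id).comp_continuousOn hΦ |>.aestronglyMeasurable hΩ)
    (ae_restrict_of_forall_mem hΩ fun y hy =>
      (abs_real_inner_le_norm w (Φ y)).trans
        (mul_le_mul_of_nonneg_left (hbdd y hy) (norm_nonneg w)))

theorem le_measure_forall_abs_mcDeviation_le {ι : Type*} [Fintype ι] (hΩ : MeasurableSet Ω)
    (hΦ : ContinuousOn Φ Ω) (hκ : 0 ≤ κ) (hbdd : ∀ y ∈ Ω, ‖Φ y‖ ≤ κ) {μ : ι → Measure E}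
    (hμΩ : ∀ j, μ j Ω = 1) {m : ℕ} (hm : m ≠ 0) {Θ : Type*} [MeasurableSpace Θ] {P : Measure Θ}
    [IsProbabilityMeasure P] {Y : Fin m × ι → Θ → E} (hY : ∀ p, Measurable (Y p))
    (hindep : iIndepFun Y P) (hlaw : ∀ l j, P.map (Y (l, j)) = μ j) (h : H) {ε : ℝ}
    (hε : 0 ≤ ε) :
    ENNReal.ofReal (1 - 2 * Fintype.card ι * Real.exp (-(m : ℝ) * ε ^ 2 / (2 * κ ^ 2))) ≤
      P {θ | ∀ j, |mcDeviation Ω μ Φ Y h θ j| ≤ ε * ‖h‖} := by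
  rcases eq_or_ne h 0 with rfl | hh
  · calc _ ≤ 1 := ENNReal.ofReal_le_one.2 (sub_le_self _ (by positivity))
      _ = P _ := by simp [mcDeviation]
  -- The samples lie in `Ω` almost surely, so `⟪h, Φ ·⟫` may be replaced by its extension by zero,
  -- which is measurable and bounded.
  have hF : Measurable (Ω.indicator fun y => ⟪h, Φ y⟫) := by
    classical
    rw [← Set.piecewise_eq_indicator]
    exact ((continuous_const.inner continuous_id).comp_continuousOn hΦ).measurable_piecewise
      continuous_zero.continuousOn hΩ
  have hFbdd : ∀ y, Ω.indicator (fun y => ⟪h, Φ y⟫) y ∈ Set.Icc (-(‖h‖ * κ)) (‖h‖ * κ) := by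
    intro y
    by_cases hy : y ∈ Ω
    · rw [Set.indicator_of_mem hy, Set.mem_Icc, ← abs_le]
      exact (abs_real_inner_le_norm h (Φ y)).trans
        (mul_le_mul_of_nonneg_left (hbdd y hy) (norm_nonneg h))
    · rw [Set.indicator_of_notMem hy]
      constructor <;> nlinarith [norm_nonneg h]
  have hmemΩ : ∀ᵐ θ ∂P, ∀ p, Y p θ ∈ Ω := by
    refine ae_all_iff.2 fun ⟨l, j⟩ => (ae_iff_measure_eq (hY _ hΩ).nullMeasurableSet).2 ?_
    show P (Y (l, j) ⁻¹' Ω) = P Set.univ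
    rw [measure_univ, ← Measure.map_apply (hY _) hΩ, hlaw]
    exact hμΩ j
  have hexp : -2 * m * (ε * ‖h‖) ^ 2 / (‖h‖ * κ - -(‖h‖ * κ)) ^ 2 =
      -(m : ℝ) * ε ^ 2 / (2 * κ ^ 2) := by
    rw [show -2 * m * (ε * ‖h‖) ^ 2 / (‖h‖ * κ - -(‖h‖ * κ)) ^ 2 =
      (2 * ‖h‖ ^ 2) * (-m * ε ^ 2) / ((2 * ‖h‖ ^ 2) * (2 * κ ^ 2)) by ring,
      mul_div_mul_left _ _ (by positivity)]
  have := le_measure_forall_abs_sampleMean_sub_integral_lt hm hY hindep hlaw hF hFbdd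
    (mul_nonneg hε (norm_nonneg h))
  rw [hexp] at this
  refine this.trans (measure_mono_ae ?_)
  filter_upwards [hmemΩ] with θ hθ hθS j
  have hdev : mcDeviation Ω μ Φ Y h θ j =
      (m : ℝ)⁻¹ * ∑ l, Ω.indicator (fun y => ⟪h, Φ y⟫) (Y (l, j) θ) -
        ∫ y, Ω.indicator (fun y => ⟪h, Φ y⟫) y ∂μ j := by
    simp only [mcDeviation, integral_indicator hΩ, Set.indicator_of_mem (hθ _)]
  exact hdev ▸ (hθS j).le

end MonteCarlo

theorem Matrix.abs_dotProduct_le_mul_sum_abs {ι : Type*} [Fintype ι] {a b : ι → ℝ} {δ : ℝ}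
    (ha : ∀ i, |a i| ≤ δ) : |a ⬝ᵥ b| ≤ δ * ∑ i, |b i| := by
  rw [Finset.mul_sum]
  refine (Finset.abs_sum_le_sum_abs _ _).trans (Finset.sum_le_sum fun i _ => ?_)
  rw [abs_mul]
  exact mul_le_mul_of_nonneg_right (ha i) (abs_nonneg _)

section Propagation

variable {n : ℕ} {H : Type*} [NormedAddCommGroup H] [InnerProductSpace ℝ H]
  {Φ : EuclideanSpace ℝ (Fin n) → H} {d : ℕ} {x : Fin d → EuclideanSpace ℝ (Fin n)}

theorem vecMul_propMatrixMC (g : Fin d → ℝ) (m : ℕ) {Θ : Type*}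
    (Y : Fin m × Fin d → Θ → EuclideanSpace ℝ (Fin n)) (θ : Θ) (j : Fin d) :
    (g ᵥ* propMatrixMC Φ d x m Y θ) j = (m : ℝ)⁻¹ * ∑ l, ⟪∑ i, g i • Φ (x i), Φ (Y (l, j) θ)⟫ := by
  simp only [vecMul, dotProduct, propMatrixMC, of_apply, sum_inner, real_inner_smul_left,
    Finset.mul_sum, one_div]
  rw [Finset.sum_comm]
  exact Finset.sum_congr rfl fun _ _ => Finset.sum_congr rfl fun _ _ => by ring

theorem vecMul_propMatrix {Ω : Set (EuclideanSpace ℝ (Fin n))} (hΩ : MeasurableSet Ω)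
    (ρ : Kernel (EuclideanSpace ℝ (Fin n)) (EuclideanSpace ℝ (Fin n))) [IsFiniteKernel ρ]
    (hΦ : ContinuousOn Φ Ω) {κ : ℝ} (hbdd : ∀ y ∈ Ω, ‖Φ y‖ ≤ κ) (g : Fin d → ℝ) (j : Fin d) :
    (g ᵥ* propMatrix Ω ρ Φ d x) j = ∫ y in Ω, ⟪∑ i, g i • Φ (x i), Φ y⟫ ∂ρ (x j) := by
  simp only [vecMul, dotProduct, propMatrix, of_apply, sum_inner, real_inner_smul_left]
  rw [integral_finsetSum _ fun i _ =>
    (integrableOn_inner_of_continuousOn hΩ hΦ hbdd (Φ (x i))).const_mul (g i)]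
  simp only [integral_const_mul]

theorem regularized_mc_sub_eq_dotProduct_mcDeviation {Ω : Set (EuclideanSpace ℝ (Fin n))}
    (hΩ : MeasurableSet Ω) (ρ : Kernel (EuclideanSpace ℝ (Fin n)) (EuclideanSpace ℝ (Fin n)))
    [IsFiniteKernel ρ] (hΦ : ContinuousOn Φ Ω) {κ : ℝ} (hbdd : ∀ y ∈ Ω, ‖Φ y‖ ≤ κ) (m : ℕ)
    {Θ : Type*} (Y : Fin m × Fin d → Θ → EuclideanSpace ℝ (Fin n)) (θ : Θ) (f : H) (lam : ℝ)
    (z : EuclideanSpace ℝ (Fin n)) :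
    (fun j => ⟪Φ (x j), f⟫) ⬝ᵥ
        ((kerMatrix Φ d x + lam • (1 : Matrix (Fin d) (Fin d) ℝ))⁻¹ *ᵥ
          (propMatrixMC Φ d x m Y θ *ᵥ
            ((kerMatrix Φ d x + lam • (1 : Matrix (Fin d) (Fin d) ℝ))⁻¹ *ᵥ kerVec Φ d x z))) -
      (fun j => ⟪Φ (x j), f⟫) ⬝ᵥ
        ((kerMatrix Φ d x + lam • (1 : Matrix (Fin d) (Fin d) ℝ))⁻¹ *ᵥ
          (propMatrix Ω ρ Φ d x *ᵥ
            ((kerMatrix Φ d x + lam • (1 : Matrix (Fin d) (Fin d) ℝ))⁻¹ *ᵥ kerVec Φ d x z))) =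
      mcDeviation Ω (fun j => ρ (x j)) Φ Y
          (∑ i, ridgeCoeff (fun i => Φ (x i)) lam f i • Φ (x i)) θ ⬝ᵥ
        ridgeCoeff (fun i => Φ (x i)) lam (Φ z) := by
  have hK : kerMatrix Φ d x = gram ℝ fun i => Φ (x i) := rfl
  rw [hK, dotProduct_inv_gram_add_smul_one_mulVec, dotProduct_inv_gram_add_smul_one_mulVec,
    ← dotProduct_sub, ← sub_mulVec, dotProduct_mulVec]
  congr 1
  ext j
  rw [vecMul_sub, Pi.sub_apply, vecMul_propMatrixMC, vecMul_propMatrix hΩ ρ hΦ hbdd]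
  rfl

end Propagation

theorem kEDMD_regularized_monte_carlo_error_bound_general
    {n : ℕ}
    (Ω : Set (EuclideanSpace ℝ (Fin n)))
    (hΩne : Ω.Nonempty) (hΩopen : IsOpen Ω)
    (ρ : ProbabilityTheory.Kernel (EuclideanSpace ℝ (Fin n)) (EuclideanSpace ℝ (Fin n)))
    [IsMarkovKernel ρ] (hρΩ : ∀ x ∈ Ω, ρ x Ω = 1)
    {H : Type*} [NormedAddCommGroup H] [InnerProductSpace ℝ H]
    (ev : H →ₗ[ℝ] (EuclideanSpace ℝ (Fin n) → ℝ))
    (Φ : EuclideanSpace ℝ (Fin n) → H)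
    (hrepr : ∀ (f : H), ∀ x ∈ Ω, ev f x = ⟪f, Φ x⟫)
    (hΦcont : ContinuousOn Φ Ω)
    (Mk : ℝ) (hMk : ∀ x ∈ Ω, ∀ y ∈ Ω, |⟪Φ x, Φ y⟫| ≤ Mk)
    (d : ℕ) (x : Fin d → EuclideanSpace ℝ (Fin n))
    (hxΩ : ∀ i, x i ∈ Ω)
    -- the i.i.d. samples `y_{l,j} ∼ ρ_{x_j}`, independent across all indices
    (m : ℕ) (hm : 1 ≤ m)
    {Θ : Type*} [MeasurableSpace Θ] (P : Measure Θ) [IsProbabilityMeasure P]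
    (Y : Fin m × Fin d → Θ → EuclideanSpace ℝ (Fin n))
    (hYmeas : ∀ p, Measurable (Y p))
    (hYindep : ProbabilityTheory.iIndepFun
      Y P)
    (hYlaw : ∀ (l : Fin m) (j : Fin d), Measure.map (Y (l, j)) P = ρ (x j))
    (f : H)
    (ε : ℝ) (hε : 0 < ε)
    (lam : ℝ) (hlam : 0 < lam) :
    ENNReal.ofReal (1 - 2 * d * Real.exp (-(m : ℝ) * ε ^ 2 / (2 * Mk))) ≤
      P {θ : Θ | ∀ z ∈ Ω,
        |(fun j => ev f (x j)) ⬝ᵥ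
            ((kerMatrix Φ d x + lam • (1 : Matrix (Fin d) (Fin d) ℝ))⁻¹ *ᵥ
              (propMatrixMC Φ d x m Y θ *ᵥ
                ((kerMatrix Φ d x + lam • (1 : Matrix (Fin d) (Fin d) ℝ))⁻¹ *ᵥ
                  kerVec Φ d x z))) -
          (fun j => ev f (x j)) ⬝ᵥ
            ((kerMatrix Φ d x + lam • (1 : Matrix (Fin d) (Fin d) ℝ))⁻¹ *ᵥ
              (propMatrix Ω ρ Φ d x *ᵥ
                ((kerMatrix Φ d x + lam • (1 : Matrix (Fin d) (Fin d) ℝ))⁻¹ *ᵥ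
                  kerVec Φ d x z)))| ≤
          ε * Real.sqrt Mk * Real.sqrt ((d : ℝ) / lam) * ‖f‖} := by
  obtain ⟨y₀, hy₀⟩ := hΩne
  have hMk0 : 0 ≤ Mk := (abs_nonneg _).trans (hMk y₀ hy₀ y₀ hy₀)
  have hΦ : ∀ y ∈ Ω, ‖Φ y‖ ≤ √Mk := fun y hy => Real.le_sqrt_of_sq_le <| by
    rw [← real_inner_self_eq_norm_sq]
    exact (le_abs_self _).trans (hMk y hy y hy)
  have hfX : (fun j => ev f (x j)) = fun j => ⟪Φ (x j), f⟫ :=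
    funext fun j => (hrepr f _ (hxΩ j)).trans (real_inner_comm _ _)
  set v : Fin d → H := fun i => Φ (x i)
  set h := ∑ i, ridgeCoeff v lam f i • v i
  have hprob := le_measure_forall_abs_mcDeviation_le hΩopen.measurableSet hΦcont
    (Real.sqrt_nonneg Mk) hΦ (fun j => hρΩ _ (hxΩ j)) (by omega) hYmeas hYindep hYlaw h hε.le
  rw [Real.sq_sqrt hMk0, Fintype.card_fin] at hprob
  refine hprob.trans (measure_mono fun θ hθ z hz => ?_)
  rw [hfX, regularized_mc_sub_eq_dotProduct_mcDeviation hΩopen.measurableSet ρ hΦcont hΦ]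
  calc _ ≤ ε * ‖h‖ * ∑ j, |ridgeCoeff v lam (Φ z) j| := abs_dotProduct_le_mul_sum_abs hθ
    _ ≤ ε * ‖f‖ * (√Mk * √(d / lam)) := by
        gcongr
        · exact norm_sum_ridgeCoeff_smul_le v hlam f
        · simpa using (sum_abs_ridgeCoeff_le v hlam (Φ z)).trans
            (mul_le_mul_of_nonneg_right (hΦ z hz) (Real.sqrt_nonneg _))
    _ = _ := by ring

/-- (Regularized Monte Carlo error bound.) With `m` i.i.d. samples
from each `ρ_{x_j}` and regularization parameter `λ > 0`, for every `f ∈ H`, with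
probability at least `1 − 2d·exp(−mε²/(2‖k‖_∞))`, the regularized Monte Carlo
approximant satisfies `‖(K̂^{MC}_λ − K̂_λ) f‖_∞ ≤ ε · ‖k‖_∞^{1/2} · √(d/λ) · ‖f‖_H`. -/
theorem kEDMD_regularized_monte_carlo_error_bound
    {n : ℕ} (hn : 1 ≤ n)
    (Ω : Set (EuclideanSpace ℝ (Fin n)))
    (hΩne : Ω.Nonempty) (hΩopen : IsOpen Ω) (hΩbdd : Bornology.IsBounded Ω)
    (ρ : ProbabilityTheory.Kernel (EuclideanSpace ℝ (Fin n)) (EuclideanSpace ℝ (Fin n)))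
    [IsMarkovKernel ρ] (hρΩ : ∀ x ∈ Ω, ρ x Ω = 1)
    {H : Type*} [NormedAddCommGroup H] [InnerProductSpace ℝ H] [CompleteSpace H]
    (ev : H →ₗ[ℝ] (EuclideanSpace ℝ (Fin n) → ℝ))
    (Φ : EuclideanSpace ℝ (Fin n) → H)
    (hrepr : ∀ (f : H), ∀ x ∈ Ω, ev f x = ⟪f, Φ x⟫)
    (hΦcont : ContinuousOn Φ Ω)
    (Mk : ℝ) (hMk : ∀ x ∈ Ω, ∀ y ∈ Ω, |⟪Φ x, Φ y⟫| ≤ Mk)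
    (d : ℕ) (hd : 1 ≤ d) (x : Fin d → EuclideanSpace ℝ (Fin n))
    (hxΩ : ∀ i, x i ∈ Ω) (hxinj : Function.Injective x)
    (hKXpos : (kerMatrix Φ d x).PosDef)
    -- the i.i.d. samples `y_{l,j} ∼ ρ_{x_j}`, independent across all indices
    (m : ℕ) (hm : 1 ≤ m)
    {Θ : Type*} [MeasurableSpace Θ] (P : Measure Θ) [IsProbabilityMeasure P]
    (Y : Fin m × Fin d → Θ → EuclideanSpace ℝ (Fin n))
    (hYmeas : ∀ p, Measurable (Y p))
    (hYindep : ProbabilityTheory.iIndepFun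
      Y P)
    (hYlaw : ∀ (l : Fin m) (j : Fin d), Measure.map (Y (l, j)) P = ρ (x j))
    (f : H)
    (ε : ℝ) (hε : 0 < ε)
    (lam : ℝ) (hlam : 0 < lam) :
    ENNReal.ofReal (1 - 2 * d * Real.exp (-(m : ℝ) * ε ^ 2 / (2 * Mk))) ≤
      P {θ : Θ | ∀ z ∈ Ω,
        |(fun j => ev f (x j)) ⬝ᵥ
            ((kerMatrix Φ d x + lam • (1 : Matrix (Fin d) (Fin d) ℝ))⁻¹ *ᵥ
              (propMatrixMC Φ d x m Y θ *ᵥ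
                ((kerMatrix Φ d x + lam • (1 : Matrix (Fin d) (Fin d) ℝ))⁻¹ *ᵥ
                  kerVec Φ d x z))) -
          (fun j => ev f (x j)) ⬝ᵥ
            ((kerMatrix Φ d x + lam • (1 : Matrix (Fin d) (Fin d) ℝ))⁻¹ *ᵥ
              (propMatrix Ω ρ Φ d x *ᵥ
                ((kerMatrix Φ d x + lam • (1 : Matrix (Fin d) (Fin d) ℝ))⁻¹ *ᵥ
                  kerVec Φ d x z)))| ≤
          ε * Real.sqrt Mk * Real.sqrt ((d : ℝ) / lam) * ‖f‖} :=
  kEDMD_regularized_monte_carlo_error_bound_general Ω hΩne hΩopen ρ hρΩ ev Φ hrepr hΦcont Mk hMk d x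
    hxΩ m hm P Y hYmeas hYindep hYlaw f ε hε lam hlam

end
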